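/- arXiv:2105.11414 — 2 statements merged into one kernel-verified Lean document; each statement's English description precedes it below -/
import Mathlib

section
/- Let d > k ≥ 1 be integers, let Γ ⊆ G(d,k) be β-scaling for some β ≥ 0, and let E ⊆ ℝ^d be a compact (d,k,Γ)-set. Then for every α with 0 < α < 1 there exist a Borel probability measure μ on ℝ^d with support contained in E and a constant C > 0 such that |μ̂(ξ)| ≤ C‖ξ‖^{−αβ} for all ξ ∈ ℝ^d with ‖ξ‖ ≥ 1. (Consequently the Fourier dimension of E is at least min{2β, d}.) -/
open MeasureTheory Metric Module
open scoped RealInnerProductSpace ENNReal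

noncomputable section

/-- `ℝ^d`. -/
abbrev Ed (d : ℕ) : Type := EuclideanSpace ℝ (Fin d)

/-- The Grassmannian `G(d,k)` of `k`-dimensional linear subspaces of `ℝ^d`. -/
def Gr (d k : ℕ) : Type := {s : Submodule ℝ (Ed d) // finrank ℝ s = k}

/-- The intersection of a subspace with the unit sphere. -/
def grSphere {d k : ℕ} (s : Gr d k) : Set (Ed d) :=
  (s.1 : Set (Ed d)) ∩ sphere (0 : Ed d) 1

lemma grSphere_isClosed {d k : ℕ} (s : Gr d k) : IsClosed (grSphere s) :=
  (Submodule.closed_of_finiteDimensional s.1).inter isClosed_sphere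

lemma submodule_eq_of_sphere_eq {d : ℕ} {s t : Submodule ℝ (Ed d)}
    (h : (s : Set (Ed d)) ∩ sphere (0 : Ed d) 1 = (t : Set (Ed d)) ∩ sphere (0 : Ed d) 1) :
    s = t := by
  have key : ∀ {s t : Submodule ℝ (Ed d)},
      (s : Set (Ed d)) ∩ sphere (0 : Ed d) 1 = (t : Set (Ed d)) ∩ sphere (0 : Ed d) 1 →
      s ≤ t := by
    intro s t h x hx
    rcases eq_or_ne x 0 with rfl | hx0
    · exact t.zero_mem
    · have hu : ‖x‖⁻¹ • x ∈ (s : Set (Ed d)) ∩ sphere (0 : Ed d) 1 := by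
        refine ⟨s.smul_mem _ hx, ?_⟩
        rw [mem_sphere_iff_norm, sub_zero, norm_smul, norm_inv, norm_norm,
          inv_mul_cancel₀ (norm_ne_zero_iff.2 hx0)]
      rw [h] at hu
      have := t.smul_mem ‖x‖ hu.1
      rwa [smul_smul, mul_inv_cancel₀ (norm_ne_zero_iff.2 hx0), one_smul] at this
  exact le_antisymm (key h) (key h.symm)

/-- The metric `d_{(d,k)}` on the Grassmannian: Hausdorff distance between the
intersections with the unit sphere. -/
instance GrEMetric (d k : ℕ) : EMetricSpace (Gr d k) where
  edist s t := Metric.hausdorffEDist (grSphere s) (grSphere t)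
  edist_self s := EMetric.hausdorffEdist_self
  edist_comm s t := EMetric.hausdorffEdist_comm
  edist_triangle s t u := EMetric.hausdorffEdist_triangle
  eq_of_edist_eq_zero := by
    intro s t h
    have heq := (EMetric.hausdorffEdist_zero_iff_eq_of_closed (grSphere_isClosed s)
      (grSphere_isClosed t)).1 h
    exact Subtype.ext (submodule_eq_of_sphere_eq heq)

lemma grSphere_nonempty {d k : ℕ} (hk : 1 ≤ k) (s : Gr d k) : (grSphere s).Nonempty := by
  have hbot : s.1 ≠ ⊥ := by
    intro hb
    have h2 := s.2
    rw [hb, finrank_bot] at h2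
    omega
  obtain ⟨x, hxs, hx0⟩ := Submodule.ne_bot_iff _ |>.1 hbot
  refine ⟨‖x‖⁻¹ • x, s.1.smul_mem _ hxs, ?_⟩
  rw [mem_sphere_iff_norm, sub_zero, norm_smul, norm_inv, norm_norm,
    inv_mul_cancel₀ (norm_ne_zero_iff.2 hx0)]

lemma grSphere_empty {d : ℕ} (s : Gr d 0) : grSphere s = ∅ := by
  have hb : s.1 = ⊥ := Submodule.finrank_eq_zero.1 s.2
  ext x
  simp [grSphere, hb, mem_sphere_iff_norm]

lemma gr_edist_ne_top {d k : ℕ} (s t : Gr d k) : edist s t ≠ ⊤ := by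
  rcases Nat.eq_zero_or_pos k with rfl | hk
  · show Metric.hausdorffEDist (grSphere s) (grSphere t) ≠ ⊤
    rw [grSphere_empty s, grSphere_empty t, EMetric.hausdorffEdist_self]
    exact ENNReal.zero_ne_top
  · exact Metric.hausdorffEdist_ne_top_of_nonempty_of_bounded
      (grSphere_nonempty hk s) (grSphere_nonempty hk t)
      ((isBounded_sphere (x := (0 : Ed d)) (r := 1)).subset Set.inter_subset_right)
      ((isBounded_sphere (x := (0 : Ed d)) (r := 1)).subset Set.inter_subset_right)

instance GrMetric (d k : ℕ) : MetricSpace (Gr d k) :=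
  EMetricSpace.toMetricSpace gr_edist_ne_top

instance (d k : ℕ) : MeasurableSpace (Gr d k) := borel _
instance (d k : ℕ) : BorelSpace (Gr d k) := ⟨rfl⟩

/-- The set `S_{ξ,η}` of subspaces nearly orthogonal to `ξ`. -/
def Sslab {d k : ℕ} (ξ : Ed d) (η : ℝ) : Set (Gr d k) :=
  {s | ‖(s.1.orthogonalProjectionOnto ξ : Ed d)‖ < η * ‖ξ‖}

/-- `Γ ⊆ G(d,k)` is `β`-scaling. -/
def BetaScaling {d k : ℕ} (Γ : Set (Gr d k)) (β : ℝ) : Prop :=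
  ∃ γ : Measure (Gr d k), IsProbabilityMeasure γ ∧ γ Γᶜ = 0 ∧
    ∃ C : ℝ, 0 < C ∧ ∀ ξ : Ed d, ξ ≠ 0 → ∀ η : ℝ, 0 < η →
      γ (Sslab ξ η) ≤ ENNReal.ofReal (C * η ^ β)

/-- `E` is a `(d,k,Γ)`-set. -/
def IsDKSet {d k : ℕ} (Γ : Set (Gr d k)) (E : Set (Ed d)) : Prop :=
  ∀ s ∈ Γ, ∃ (t : Ed d) (x : Fin k → Ed d), Orthonormal ℝ x ∧ (∀ i, x i ∈ s.1) ∧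
    ∀ r : Fin k → ℝ, (∀ i, r i ∈ Set.Icc (0 : ℝ) 1) → t + ∑ i, r i • x i ∈ E

/-- Fourier transform of a measure on `ℝ^d`. -/
def FT {d : ℕ} (μ : Measure (Ed d)) (ξ : Ed d) : ℂ :=
  ∫ x, Complex.exp (-2 * Real.pi * Complex.I * (⟪ξ, x⟫ : ℝ)) ∂μ

end

/-!
Average a smooth bump `ψ` over one unit cube of `E` for each direction `s ∈ Γ`, the cubes being
weighted by the scaling measure `γ`; the cubes are chosen measurably in `s` by a greedy selection
along a dense sequence of the compact space of cubes in `E`. At frequency `ξ` the cube with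
orthonormal edges `x₁, …, xₖ` contributes `∏ᵢ |ψ̂(⟪ξ, xᵢ⟫)|`. Put `η = ‖ξ‖^(-α)`. Directions
with `‖π_s ξ‖ < η‖ξ‖` have `γ`-mass `O(η^β) = O(‖ξ‖^(-αβ))`; for all the others some
`|⟪ξ, xᵢ⟫| ≥ ‖ξ‖^(1-α) / √k`, and the rapid decay of `ψ̂` makes them contribute
`O(‖ξ‖^(-αβ))` as well.
-/

open Set Filter Topology Submodule Complex Real
open scoped FourierTransform SchwartzMap ContDiff

noncomputable section

def unitIntervalBump : ContDiffBump (1 / 2 : ℝ) := ⟨1 / 4, 1 / 2, by norm_num, by norm_num⟩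

def bumpDensity : ℝ → ℝ := unitIntervalBump.normed volume

lemma bumpDensity_nonneg (t : ℝ) : 0 ≤ bumpDensity t := unitIntervalBump.nonneg_normed t

lemma contDiff_bumpDensity : ContDiff ℝ ∞ bumpDensity := unitIntervalBump.contDiff_normed

lemma support_bumpDensity_subset : Function.support bumpDensity ⊆ Icc 0 1 := by
  rw [bumpDensity, unitIntervalBump.support_normed_eq]
  intro t ht
  rw [Metric.mem_ball, Real.dist_eq, abs_lt] at ht
  simp only [unitIntervalBump] at ht
  constructor <;> linarith

def bumpMeasure : Measure ℝ := volume.withDensity fun t => ENNReal.ofReal (bumpDensity t)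

instance : IsProbabilityMeasure bumpMeasure := by
  constructor
  rw [bumpMeasure, withDensity_apply _ MeasurableSet.univ, Measure.restrict_univ,
    bumpDensity, ← ofReal_integral_eq_lintegral_ofReal unitIntervalBump.integrable_normed
      (.of_forall bumpDensity_nonneg), unitIntervalBump.integral_normed, ENNReal.ofReal_one]

lemma ae_bumpMeasure_mem_Icc : ∀ᵐ t ∂bumpMeasure, t ∈ Icc (0 : ℝ) 1 := by
  change bumpMeasure (Icc 0 1)ᶜ = 0
  rw [bumpMeasure, withDensity_apply _ measurableSet_Icc.compl]
  refine setLIntegral_eq_zero measurableSet_Icc.compl fun t ht => ?_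
  rw [Function.notMem_support.mp fun h => ht (support_bumpDensity_subset h), ENNReal.ofReal_zero]
  rfl

lemma norm_exp_neg_two_pi_I_mul (a : ℝ) : ‖cexp (-2 * π * I * a)‖ = 1 := by
  rw [show -2 * π * I * a = ((-2 * π * a : ℝ) : ℂ) * I by push_cast; ring, norm_exp_ofReal_mul_I]

def bumpFourier (c : ℝ) : ℂ := ∫ t, cexp (-2 * π * I * (t * c : ℝ)) ∂bumpMeasure

lemma norm_bumpFourier_le_one (c : ℝ) : ‖bumpFourier c‖ ≤ 1 :=
  (norm_integral_le_of_norm_le_const (.of_forall fun _ => (norm_exp_neg_two_pi_I_mul _).le)).trans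
    (by simp)

lemma bumpFourier_eq_fourier (c : ℝ) : bumpFourier c = 𝓕 (fun t => (bumpDensity t : ℂ)) c := by
  rw [bumpFourier, bumpMeasure, integral_withDensity_eq_integral_toReal_smul
    contDiff_bumpDensity.continuous.measurable.ennreal_ofReal
    (.of_forall fun _ => ENNReal.ofReal_lt_top), Real.fourier_real_eq_integral_exp_smul]
  refine integral_congr_ae (.of_forall fun t => ?_)
  dsimp only
  rw [ENNReal.toReal_ofReal (bumpDensity_nonneg t), smul_eq_mul, Complex.real_smul, mul_comm]
  congr 2
  push_cast
  ring

lemma bumpFourier_decay (n : ℕ) : ∃ C, ∀ c : ℝ, |c| ^ n * ‖bumpFourier c‖ ≤ C := by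
  simp_rw [bumpFourier_eq_fourier]
  have hψ : HasCompactSupport fun t => (bumpDensity t : ℂ) :=
    unitIntervalBump.hasCompactSupport_normed.comp_left Complex.ofReal_zero
  let ψ : 𝓢(ℝ, ℂ) := hψ.toSchwartzMap (ofRealCLM.contDiff.comp contDiff_bumpDensity)
  refine ⟨SchwartzMap.seminorm ℝ n 0 (𝓕 ψ), fun c => ?_⟩
  have := SchwartzMap.norm_pow_mul_le_seminorm ℝ (𝓕 ψ) n c
  rwa [SchwartzMap.fourier_coe, Real.norm_eq_abs] at this

lemma measurable_sInf_setOf_mem {Y : Type*} [MeasurableSpace Y] {A : ℕ → Set Y}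
    (hA : ∀ j, MeasurableSet (A j)) : Measurable fun s => sInf {j | s ∈ A j} := by
  refine measurable_of_Iic fun j₀ => ?_
  have : (fun s => sInf {j | s ∈ A j}) ⁻¹' Iic j₀ = (⋃ j ≤ j₀, A j) ∪ (⋃ j, A j)ᶜ := by
    ext s
    simp only [mem_preimage, mem_Iic, mem_union, mem_iUnion, mem_compl_iff, not_exists,
      exists_prop]
    by_cases h : ∃ j, s ∈ A j
    · refine ⟨fun hle => .inl ⟨_, hle, Nat.sInf_mem h⟩, ?_⟩
      rintro (⟨j, hj, hs⟩ | hs)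
      · exact (Nat.sInf_le hs).trans hj
      · exact absurd h (by simpa using hs)
    · simp only [not_exists] at h
      simp [h]
  rw [this]
  exact .union (.biUnion (to_countable _) fun j _ => hA j) (.compl (.iUnion hA))

section GreedySelection

open Metric

variable {Y Z : Type*} [MetricSpace Z] (q : Z → Y) (z : ℕ → Z)

def nestedBalls {n : ℕ} (v : Fin n → ℕ) : Set Z :=
  ⋂ m : Fin n, closedBall (z (v m)) ((1 / 2) ^ (m : ℕ))

def nextCenter {n : ℕ} (v : Fin n → ℕ) (s : Y) : ℕ :=
  sInf {j | s ∈ q '' (nestedBalls z v ∩ closedBall (z j) ((1 / 2) ^ n))}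

/-- The `n`-th center is the first point of `z` whose `2⁻ⁿ`-ball still meets the fibre over `s`
inside the balls chosen so far. -/
def centerIdx (n : ℕ) (s : Y) : ℕ :=
  nextCenter q z (fun m : Fin n => centerIdx m s) s
decreasing_by exact m.isLt

def chosenBalls (n : ℕ) (s : Y) : Set Z := nestedBalls z fun m : Fin n => centerIdx q z m s

lemma centerIdx_eq (n : ℕ) (s : Y) : centerIdx q z n s =
    sInf {j | s ∈ q '' (chosenBalls q z n s ∩ closedBall (z j) ((1 / 2) ^ n))} := by
  rw [centerIdx]; rfl

lemma chosenBalls_zero (s : Y) : chosenBalls q z 0 s = univ := by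
  simp [chosenBalls, nestedBalls]

lemma chosenBalls_succ (n : ℕ) (s : Y) : chosenBalls q z (n + 1) s =
    chosenBalls q z n s ∩ closedBall (z (centerIdx q z n s)) ((1 / 2) ^ n) := by
  ext w
  simp [chosenBalls, nestedBalls, Fin.forall_fin_succ']

variable {q z}

lemma mem_image_chosenBalls (hz : DenseRange z) {s : Y} (hs : s ∈ range q) (n : ℕ) :
    s ∈ q '' chosenBalls q z n s := by
  induction n with
  | zero => rwa [chosenBalls_zero, image_univ]
  | succ n ih =>
    obtain ⟨w, hw, rfl⟩ := ih
    obtain ⟨j, hj⟩ := hz.exists_dist_lt w (by positivity : (0 : ℝ) < (1 / 2) ^ n)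
    have hne :
        {j | q w ∈ q '' (chosenBalls q z n (q w) ∩ closedBall (z j) ((1 / 2) ^ n))}.Nonempty :=
      ⟨j, w, ⟨hw, mem_closedBall.2 hj.le⟩, rfl⟩
    rw [chosenBalls_succ]
    exact centerIdx_eq q z n (q w) ▸ Nat.sInf_mem hne

lemma dist_center_succ_le (hz : DenseRange z) {s : Y} (hs : s ∈ range q) (n : ℕ) :
    dist (z (centerIdx q z n s)) (z (centerIdx q z (n + 1) s)) ≤ 2 * (1 / 2) ^ n := by
  obtain ⟨w, hw, -⟩ := mem_image_chosenBalls hz hs (n + 2)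
  rw [chosenBalls_succ, chosenBalls_succ, mem_inter_iff, mem_inter_iff, mem_closedBall,
    mem_closedBall] at hw
  calc _ ≤ dist w (z (centerIdx q z n s)) + dist w (z (centerIdx q z (n + 1) s)) :=
        dist_triangle_left _ _ _
    _ ≤ (1 / 2) ^ n + (1 / 2) ^ (n + 1) := add_le_add hw.1.2 hw.2
    _ ≤ 2 * (1 / 2) ^ n := by
        rw [pow_succ]; linarith [pow_nonneg (by norm_num : (0 : ℝ) ≤ 1 / 2) n]

lemma centerIdx_of_notMem_range {s : Y} (hs : s ∉ range q) (n : ℕ) : centerIdx q z n s = 0 := by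
  have : {j | s ∈ q '' (chosenBalls q z n s ∩ closedBall (z j) ((1 / 2) ^ n))} = ∅ :=
    eq_empty_of_forall_notMem fun _ ⟨w, _, hw⟩ => hs ⟨w, hw⟩
  rw [centerIdx_eq, this, Nat.sInf_empty]

lemma cauchySeq_center (hz : DenseRange z) (s : Y) :
    CauchySeq fun n => z (centerIdx q z n s) := by
  by_cases hs : s ∈ range q
  · exact cauchySeq_of_le_geometric (1 / 2) 2 (by norm_num) (dist_center_succ_le hz hs)
  · simp only [centerIdx_of_notMem_range hs]
    exact cauchySeq_const _

/-- The limit of the centers is also the limit of points of the fibre over `s` lying in the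
shrinking balls. -/
lemma apply_eq_of_tendsto_center [TopologicalSpace Y] [T2Space Y] (hq : Continuous q)
    (hz : DenseRange z) {s : Y} (hs : s ∈ range q) {w : Z}
    (hw : Tendsto (fun n => z (centerIdx q z n s)) atTop (𝓝 w)) : q w = s := by
  choose u hu hqu using fun n => mem_image_chosenBalls hz hs (n + 1)
  have hdist : ∀ n, dist (u n) (z (centerIdx q z n s)) ≤ (1 / 2) ^ n := fun n => by
    have := hu n
    rw [chosenBalls_succ] at this
    exact this.2
  have hlim : Tendsto u atTop (𝓝 w) :=
    tendsto_of_tendsto_of_dist hw <| squeeze_zero (fun _ => dist_nonneg)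
      (fun n => (dist_comm _ _).trans_le (hdist n))
      (tendsto_pow_atTop_nhds_zero_of_lt_one (by norm_num) (by norm_num))
  exact tendsto_nhds_unique ((hq.tendsto w).comp hlim) (by simp [Function.comp_def, hqu])

variable [TopologicalSpace Y] [T2Space Y] [MeasurableSpace Y] [OpensMeasurableSpace Y]
  [CompactSpace Z]

lemma measurable_nextCenter (hq : Continuous q) {n : ℕ} (v : Fin n → ℕ) :
    Measurable (nextCenter q z v) :=
  measurable_sInf_setOf_mem fun _ =>
    (((isClosed_iInter fun _ => isClosed_closedBall).inter isClosed_closedBall).isCompact.image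
      hq).isClosed.measurableSet

lemma measurable_centerIdx (hq : Continuous q) (n : ℕ) : Measurable (centerIdx q z n) := by
  induction n using Nat.strong_induction_on with
  | _ n ih =>
    have hprefix : Measurable fun s => fun m : Fin n => centerIdx q z m s :=
      measurable_pi_lambda _ fun m => ih m m.isLt
    have hnext : Measurable fun p : (Fin n → ℕ) × Y => nextCenter q z p.1 p.2 :=
      measurable_from_prod_countable_right fun v => measurable_nextCenter hq v
    have hcomp := hnext.comp (hprefix.prodMk measurable_id)
    rwa [show centerIdx q z n = _ from funext (centerIdx.eq_1 q z n)]

end GreedySelection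

theorem Continuous.exists_measurable_rightInvOn_range {Y Z : Type*} [TopologicalSpace Y]
    [T2Space Y] [MeasurableSpace Y] [OpensMeasurableSpace Y] [MetricSpace Z] [CompactSpace Z]
    [Nonempty Z] [MeasurableSpace Z] [BorelSpace Z] {q : Z → Y} (hq : Continuous q) :
    ∃ g : Y → Z, Measurable g ∧ RightInvOn g q (range q) := by
  have hz := TopologicalSpace.denseRange_denseSeq Z
  choose g hg using fun s => cauchySeq_tendsto_of_complete (cauchySeq_center (q := q) hz s)
  exact ⟨g, measurable_of_tendsto_metrizable
    (fun n => measurable_from_nat.comp (measurable_centerIdx hq n)) (tendsto_pi_nhds.2 hg),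
    fun s hs => apply_eq_of_tendsto_center hq hz hs (hg s)⟩

section Frames

variable {E : Type*} [NormedAddCommGroup E] [InnerProductSpace ℝ E] {ι : Type*}

lemma isClosed_setOf_orthonormal : IsClosed {x : ι → E | Orthonormal ℝ x} := by
  classical
  simp only [orthonormal_iff_ite, ofPred_forall]
  exact isClosed_iInter fun i => isClosed_iInter fun j =>
    isClosed_eq ((continuous_apply i).inner (continuous_apply j)) continuous_const

variable [Fintype ι] {x : ι → E}

lemma Orthonormal.norm_sum_smul_eq {y : ι → E} (hx : Orthonormal ℝ x) (hy : Orthonormal ℝ y)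
    (c : ι → ℝ) : ‖∑ i, c i • y i‖ = ‖∑ i, c i • x i‖ := by
  have hsq : ‖∑ i, c i • y i‖ ^ 2 = ‖∑ i, c i • x i‖ ^ 2 := by
    simp only [← real_inner_self_eq_norm_sq, hx.inner_sum, hy.inner_sum]
  exact (sq_eq_sq₀ (norm_nonneg _) (norm_nonneg _)).1 hsq

lemma Orthonormal.exists_mem_span_dist_le {y : ι → E} (hx : Orthonormal ℝ x)
    (hy : Orthonormal ℝ y) {u : E} (hu : u ∈ span ℝ (range x)) (hu1 : ‖u‖ = 1) :
    ∃ v ∈ span ℝ (range y), ‖v‖ = 1 ∧ dist u v ≤ Fintype.card ι * dist x y := by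
  obtain ⟨c, rfl⟩ := mem_span_range_iff_exists_fun ℝ |>.1 hu
  have hc : ∀ i, |c i| ≤ 1 := fun i => by
    simpa [hx.inner_right_fintype, hx.norm_eq_one, hu1] using
      abs_real_inner_le_norm (x i) (∑ i, c i • x i)
  refine ⟨∑ i, c i • y i, sum_mem fun i _ => smul_mem _ _ (subset_span (mem_range_self i)),
    (hx.norm_sum_smul_eq hy c).trans hu1, ?_⟩
  calc dist (∑ i, c i • x i) (∑ i, c i • y i) = ‖∑ i, c i • (x i - y i)‖ := by
        simp [dist_eq_norm, smul_sub]
    _ ≤ ∑ i, |c i| * ‖x i - y i‖ := (norm_sum_le _ _).trans_eq (by simp [norm_smul])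
    _ ≤ ∑ _i : ι, 1 * dist x y := Finset.sum_le_sum fun i _ =>
        mul_le_mul (hc i) (dist_eq_norm (x i) (y i) ▸ dist_le_pi_dist x y i) (norm_nonneg _)
          zero_le_one
    _ = Fintype.card ι * dist x y := by simp

lemma Orthonormal.norm_sq_orthogonalProjectionOnto_span [FiniteDimensional ℝ E]
    (hx : Orthonormal ℝ x) (ξ : E) :
    ‖((span ℝ (range x)).orthogonalProjectionOnto ξ : E)‖ ^ 2 = ∑ i, ⟪x i, ξ⟫ ^ 2 := by
  let b : OrthonormalBasis ι ℝ (span ℝ (range x)) :=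
    (Basis.span hx.linearIndependent).toOrthonormalBasis (by
      have : ⇑(Basis.span hx.linearIndependent) =
          Set.codRestrict x _ fun i => subset_span (mem_range_self i) :=
        funext fun i => Basis.span_apply _ i
      exact this ▸ hx.codRestrict _ _)
  have hb : ∀ i, (b i : E) = x i := fun i => by
    simp only [b, Basis.coe_toOrthonormalBasis, Basis.span_apply]
  rw [Submodule.norm_coe, ← b.sum_sq_norm_inner_right]
  refine Finset.sum_congr rfl fun i _ => ?_
  rw [inner_orthogonalProjectionOnto_eq_of_mem_left, hb, Real.norm_eq_abs, sq_abs]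

end Frames

variable {d k : ℕ}

def frameSpan (x : {x : Fin k → Ed d // Orthonormal ℝ x}) : Gr d k :=
  ⟨span ℝ (range x.1), by rw [finrank_span_eq_card x.2.linearIndependent, Fintype.card_fin]⟩

lemma lipschitzWith_frameSpan : LipschitzWith k (frameSpan (d := d) (k := k)) := by
  have key : ∀ x y : {x : Fin k → Ed d // Orthonormal ℝ x}, ∀ u ∈ grSphere (frameSpan x),
      ∃ v ∈ grSphere (frameSpan y), edist u v ≤ k * edist x y := by
    rintro x y u ⟨hu, hu1⟩
    obtain ⟨v, hv, hv1, hdist⟩ :=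
      x.2.exists_mem_span_dist_le y.2 hu (mem_sphere_zero_iff_norm.1 hu1)
    refine ⟨v, ⟨hv, mem_sphere_zero_iff_norm.2 hv1⟩, ?_⟩
    rw [edist_dist, edist_dist, ← ENNReal.ofReal_natCast,
      ← ENNReal.ofReal_mul (Nat.cast_nonneg k)]
    exact ENNReal.ofReal_le_ofReal (by simpa [Subtype.dist_eq] using hdist)
  exact fun x y => hausdorffEDist_le_of_mem_edist (key x y) fun u hu =>
    edist_comm x y ▸ key y x u hu

def cubePoint (w : Ed d × (Fin k → Ed d)) (r : Fin k → ℝ) : Ed d := w.1 + ∑ i, r i • w.2 i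

lemma continuous_cubePoint : Continuous (Function.uncurry (cubePoint (d := d) (k := k))) :=
  continuous_fst.fst.add <| continuous_finsetSum _ fun i _ =>
    (continuous_apply i).comp continuous_snd |>.smul <|
      (continuous_apply i).comp continuous_fst.snd

def cubeFrames (E : Set (Ed d)) : Set (Ed d × (Fin k → Ed d)) :=
  {w | Orthonormal ℝ w.2 ∧ ∀ r : Fin k → ℝ, (∀ i, r i ∈ Icc (0 : ℝ) 1) → cubePoint w r ∈ E}

lemma isCompact_cubeFrames {E : Set (Ed d)} (hE : IsCompact E) :
    IsCompact (cubeFrames (k := k) E) := by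
  have hclosed : IsClosed (cubeFrames (k := k) E) := by
    simp only [cubeFrames, ofPred_and, ofPred_forall]
    exact (isClosed_setOf_orthonormal.preimage continuous_snd).inter <|
      isClosed_iInter fun r => isClosed_iInter fun _ =>
        hE.isClosed.preimage (continuous_cubePoint.comp (.prodMk_left r))
  refine Metric.isCompact_of_isClosed_isBounded hclosed <|
    (hE.isBounded.prod (Metric.isBounded_closedBall (x := 0) (r := 1))).subset ?_
  rintro w ⟨hx, hcube⟩
  refine ⟨by simpa [cubePoint] using hcube 0 fun i => by simp, ?_⟩
  rw [mem_closedBall_zero_iff, pi_norm_le_iff_of_nonneg zero_le_one]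
  exact fun i => (hx.1 i).le

def cubeSpan (E : Set (Ed d)) (w : cubeFrames (k := k) E) : Gr d k := frameSpan ⟨w.1.2, w.2.1⟩

lemma continuous_cubeSpan (E : Set (Ed d)) : Continuous (cubeSpan (k := k) E) :=
  lipschitzWith_frameSpan.continuous.comp <|
    (continuous_snd.comp continuous_subtype_val).subtype_mk fun w => w.2.1

lemma IsDKSet.subset_range_cubeSpan {Γ : Set (Gr d k)} {E : Set (Ed d)} (hE : IsDKSet Γ E) :
    Γ ⊆ range (cubeSpan E) := by
  intro s hs
  obtain ⟨t, x, hx, hxs, hcube⟩ := hE s hs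
  refine ⟨⟨(t, x), hx, hcube⟩, Subtype.ext ?_⟩
  show span ℝ (range x) = s.1
  refine eq_of_le_of_finrank_eq (span_le.2 (range_subset_iff.2 hxs)) ?_
  rw [finrank_span_eq_card hx.linearIndependent, Fintype.card_fin, s.2]

lemma IsDKSet.exists_measure_cubeFrames {Γ : Set (Gr d k)} {E : Set (Ed d)} (hE : IsDKSet Γ E)
    (hEc : IsCompact E) (γ : Measure (Gr d k)) [IsProbabilityMeasure γ] (hγ : γ Γᶜ = 0) :
    ∃ P : Measure (Ed d × (Fin k → Ed d)), IsProbabilityMeasure P ∧ P (cubeFrames E)ᶜ = 0 ∧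
      ∀ ξ : Ed d, ∀ η : ℝ, 0 < η →
        P {w | ∑ i, ⟪ξ, w.2 i⟫ ^ 2 < (η * ‖ξ‖) ^ 2} ≤ γ (Sslab ξ η) := by
  obtain ⟨s₀, hs₀⟩ : Γ.Nonempty := nonempty_of_measure_ne_zero fun h => by
    have := measure_union_le (μ := γ) Γ Γᶜ
    rw [union_compl_self, measure_univ, h, hγ, add_zero] at this
    exact one_ne_zero (nonpos_iff_eq_zero.1 this)
  have hW := isCompact_cubeFrames (k := k) hEc
  have : CompactSpace (cubeFrames (k := k) E) := isCompact_iff_compactSpace.1 hW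
  have : Nonempty (cubeFrames (k := k) E) := ⟨(hE.subset_range_cubeSpan hs₀).choose⟩
  obtain ⟨g, hg, hgq⟩ := (continuous_cubeSpan (k := k) E).exists_measurable_rightInvOn_range
  have hG : Measurable (Subtype.val ∘ g) := measurable_subtype_coe.comp hg
  refine ⟨γ.map (Subtype.val ∘ g), Measure.isProbabilityMeasure_map hG.aemeasurable, ?_,
    fun ξ η hη => ?_⟩
  · rw [Measure.map_apply hG hW.isClosed.measurableSet.compl]
    convert measure_empty (μ := γ)
    exact eq_empty_of_forall_notMem fun s hs => hs (g s).2
  rw [Measure.map_apply hG (measurableSet_lt (by fun_prop) measurable_const)]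
  refine measure_mono_ae ?_
  filter_upwards [mem_ae_iff.2 hγ] with s hs hsA
  have hspan : span ℝ (range (g s).1.2) = s.1 :=
    congrArg Subtype.val (hgq (hE.subset_range_cubeSpan hs))
  show ‖(s.1.orthogonalProjectionOnto ξ : Ed d)‖ < η * ‖ξ‖
  refine lt_of_pow_lt_pow_left₀ 2 (by positivity) ?_
  rw [← hspan, (g s).2.1.norm_sq_orthogonalProjectionOnto_span]
  simp_rw [real_inner_comm ξ]
  exact hsA

def cubeAverage (P : Measure (Ed d × (Fin k → Ed d))) : Measure (Ed d) :=
  (P.prod (Measure.pi fun _ => bumpMeasure)).map (Function.uncurry cubePoint)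

instance (P : Measure (Ed d × (Fin k → Ed d))) [IsProbabilityMeasure P] :
    IsProbabilityMeasure (cubeAverage P) :=
  Measure.isProbabilityMeasure_map continuous_cubePoint.aemeasurable

lemma cubeAverage_compl_eq_zero {P : Measure (Ed d × (Fin k → Ed d))} [SFinite P]
    {E : Set (Ed d)} (hE : MeasurableSet E) (hP : P (cubeFrames E)ᶜ = 0) :
    cubeAverage P Eᶜ = 0 := by
  rw [← mem_ae_iff]
  change ∀ᵐ x ∂cubeAverage P, x ∈ E
  rw [cubeAverage, ae_map_iff continuous_cubePoint.aemeasurable (p := (· ∈ E)) hE]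
  have hframe : ∀ᵐ p ∂(P.prod (Measure.pi fun _ : Fin k => bumpMeasure)), p.1 ∈ cubeFrames E :=
    Measure.quasiMeasurePreserving_fst.ae (mem_ae_iff.2 hP)
  have hcube : ∀ᵐ p ∂(P.prod (Measure.pi fun _ : Fin k => bumpMeasure)),
      ∀ i, p.2 i ∈ Icc (0 : ℝ) 1 :=
    Measure.quasiMeasurePreserving_snd.ae <| ae_all_iff.2 fun i =>
      (Measure.quasiMeasurePreserving_eval _ i).ae ae_bumpMeasure_mem_Icc
  filter_upwards [hframe, hcube] with p hp hr
  exact hp.2 p.2 hr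

lemma integral_exp_cubePoint (ξ : Ed d) (w : Ed d × (Fin k → Ed d)) :
    ∫ r, cexp (-2 * π * I * ⟪ξ, cubePoint w r⟫) ∂Measure.pi (fun _ => bumpMeasure) =
      cexp (-2 * π * I * ⟪ξ, w.1⟫) * ∏ i, bumpFourier ⟪ξ, w.2 i⟫ := by
  have h : ∀ r, cexp (-2 * π * I * ⟪ξ, cubePoint w r⟫) =
      cexp (-2 * π * I * ⟪ξ, w.1⟫) * ∏ i, cexp (-2 * π * I * (r i * ⟪ξ, w.2 i⟫ : ℝ)) :=
    fun r => by
      simp only [cubePoint, inner_add_right, inner_sum, real_inner_smul_right, ofReal_add,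
        ofReal_sum, mul_add, Complex.exp_add, Finset.mul_sum, Complex.exp_sum]
  simp_rw [h, integral_const_mul]
  rw [integral_fintype_prod_eq_prod (fun i t => cexp (-2 * π * I * (t * ⟪ξ, w.2 i⟫ : ℝ)))]
  rfl

lemma norm_FT_cubeAverage_le (P : Measure (Ed d × (Fin k → Ed d))) [IsFiniteMeasure P]
    (ξ : Ed d) : ‖FT (cubeAverage P) ξ‖ ≤ ∫ w, ∏ i, ‖bumpFourier ⟪ξ, w.2 i⟫‖ ∂P := by
  have hcont : Continuous fun x : Ed d => cexp (-2 * π * I * ⟪ξ, x⟫) := by fun_prop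
  have hint : Integrable (fun p => cexp (-2 * π * I * ⟪ξ, Function.uncurry cubePoint p⟫))
      (P.prod (Measure.pi fun _ => bumpMeasure)) :=
    (integrable_const (1 : ℝ)).mono' (hcont.comp continuous_cubePoint).aestronglyMeasurable
      (.of_forall fun _ => (norm_exp_neg_two_pi_I_mul _).le)
  rw [FT, cubeAverage, integral_map continuous_cubePoint.aemeasurable hcont.aestronglyMeasurable,
    integral_prod _ hint]
  simp only [Function.uncurry_apply_pair, integral_exp_cubePoint]
  refine (norm_integral_le_integral_norm _).trans_eq (integral_congr_ae (.of_forall fun w => ?_))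
  dsimp only
  rw [norm_mul, norm_prod, norm_exp_neg_two_pi_I_mul, one_mul]

lemma prod_le_indicator_add {ι : Type*} [Fintype ι] {f : ℝ → ℝ} (hf0 : ∀ c, 0 ≤ f c)
    (hf1 : ∀ c, f c ≤ 1) {N : ℕ} {D : ℝ} (hD : ∀ c, (c ^ 2) ^ N * f c ≤ D) {M : ℝ} (hM : 0 < M)
    (c : ι → ℝ) :
    ∏ i, f (c i) ≤ {c : ι → ℝ | ∑ i, c i ^ 2 < M}.indicator 1 c +
      (Fintype.card ι : ℝ) ^ N * D / M ^ N := by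
  have hD0 : 0 ≤ D := (mul_nonneg (by positivity) (hf0 0)).trans (hD 0)
  by_cases hc : c ∈ {c : ι → ℝ | ∑ i, c i ^ 2 < M}
  · rw [indicator_of_mem hc, Pi.one_apply]
    exact le_add_of_le_of_nonneg (Finset.prod_le_one (fun i _ => hf0 _) fun i _ => hf1 _)
      (by positivity)
  rw [indicator_of_notMem hc, zero_add]
  have hcard : (0 : ℝ) < Fintype.card ι := by
    rcases isEmpty_or_nonempty ι with hι | hι
    · simp at hc; linarith
    · exact_mod_cast Fintype.card_pos
  obtain ⟨j, -, hj⟩ : ∃ j ∈ Finset.univ, M / Fintype.card ι ≤ c j ^ 2 := by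
    refine Finset.exists_le_of_sum_le (Finset.univ_nonempty_iff.2 ?_) ?_
    · exact Fintype.card_pos_iff.1 (by exact_mod_cast hcard)
    · simpa [Finset.card_univ, mul_div_cancel₀ _ hcard.ne'] using not_lt.1 (notMem_ofPred_iff.1 hc)
  have hMj : M ^ N ≤ (Fintype.card ι : ℝ) ^ N * (c j ^ 2) ^ N := by
    rw [← mul_pow]
    exact pow_le_pow_left₀ hM.le ((div_le_iff₀' hcard).1 hj) N
  calc ∏ i, f (c i) ≤ f (c j) := by
        classical
        rw [← Finset.mul_prod_erase _ _ (Finset.mem_univ j)]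
        exact mul_le_of_le_one_right (hf0 _)
          (Finset.prod_le_one (fun i _ => hf0 _) fun i _ => hf1 _)
    _ ≤ (Fintype.card ι : ℝ) ^ N * D / M ^ N := by
        rw [le_div_iff₀ (by positivity)]
        calc f (c j) * M ^ N ≤ f (c j) * ((Fintype.card ι : ℝ) ^ N * (c j ^ 2) ^ N) :=
              mul_le_mul_of_nonneg_left hMj (hf0 _)
          _ = (Fintype.card ι : ℝ) ^ N * ((c j ^ 2) ^ N * f (c j)) := by ring
          _ ≤ (Fintype.card ι : ℝ) ^ N * D :=
              mul_le_mul_of_nonneg_left (hD _) (by positivity)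

lemma integral_prod_norm_bumpFourier_le (P : Measure (Ed d × (Fin k → Ed d)))
    [IsProbabilityMeasure P] (ξ : Ed d) {N : ℕ} {D : ℝ}
    (hD : ∀ c, (c ^ 2) ^ N * ‖bumpFourier c‖ ≤ D) {M : ℝ} (hM : 0 < M) :
    ∫ w, ∏ i, ‖bumpFourier ⟪ξ, w.2 i⟫‖ ∂P ≤
      P.real {w | ∑ i, ⟪ξ, w.2 i⟫ ^ 2 < M} + (k : ℝ) ^ N * D / M ^ N := by
  have hA : MeasurableSet {w : Ed d × (Fin k → Ed d) | ∑ i, ⟪ξ, w.2 i⟫ ^ 2 < M} :=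
    measurableSet_lt (by fun_prop) measurable_const
  have hbound := fun w : Ed d × (Fin k → Ed d) => prod_le_indicator_add (fun c => norm_nonneg _)
    norm_bumpFourier_le_one hD hM fun i => ⟪ξ, w.2 i⟫
  simp only [Fintype.card_fin] at hbound
  calc ∫ w, ∏ i, ‖bumpFourier ⟪ξ, w.2 i⟫‖ ∂P
      ≤ ∫ w, ({w : Ed d × (Fin k → Ed d) | ∑ i, ⟪ξ, w.2 i⟫ ^ 2 < M}.indicator 1 w +
          (k : ℝ) ^ N * D / M ^ N) ∂P :=
        integral_mono_of_nonneg (.of_forall fun w => by positivity)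
          (((integrable_const 1).indicator hA).add (integrable_const _)) (.of_forall hbound)
    _ = _ := by
        rw [integral_add ((integrable_const 1).indicator hA) (integrable_const _),
          integral_indicator_one hA, integral_const, probReal_univ, one_smul]

theorem norm_FT_cubeAverage_le_rpow {P : Measure (Ed d × (Fin k → Ed d))}
    [IsProbabilityMeasure P] {β C : ℝ} (hC : 0 < C)
    (hP : ∀ ξ : Ed d, ξ ≠ 0 → ∀ η : ℝ, 0 < η →
      P {w | ∑ i, ⟪ξ, w.2 i⟫ ^ 2 < (η * ‖ξ‖) ^ 2} ≤ ENNReal.ofReal (C * η ^ β))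
    {α : ℝ} (hα : α < 1) :
    ∃ C' : ℝ, 0 < C' ∧ ∀ ξ : Ed d, 1 ≤ ‖ξ‖ →
      ‖FT (cubeAverage P) ξ‖ ≤ C' * ‖ξ‖ ^ (-(α * β)) := by
  set N : ℕ := ⌈α * β / (2 * (1 - α))⌉₊
  obtain ⟨D, hD⟩ := bumpFourier_decay (2 * N)
  have hD' : ∀ c, (c ^ 2) ^ N * ‖bumpFourier c‖ ≤ D := fun c => by
    simpa [pow_mul, sq_abs] using hD c
  have hD0 : 0 ≤ D := (mul_nonneg (by positivity) (norm_nonneg _)).trans (hD' 0)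
  refine ⟨C + (k : ℝ) ^ N * D, by positivity, fun ξ hξ => ?_⟩
  have hξ0 : 0 < ‖ξ‖ := one_pos.trans_le hξ
  set η := ‖ξ‖ ^ (-α)
  have hη : 0 < η := rpow_pos_of_pos hξ0 _
  have hηβ : η ^ β = ‖ξ‖ ^ (-(α * β)) := by rw [← rpow_mul hξ0.le, neg_mul]
  have hMN : ‖ξ‖ ^ (α * β) ≤ ((η * ‖ξ‖) ^ 2) ^ N := by
    have : ((η * ‖ξ‖) ^ 2) ^ N = ‖ξ‖ ^ (2 * (1 - α) * N) := by
      rw [← rpow_add_one hξ0.ne', ← rpow_natCast, ← rpow_natCast, ← rpow_mul hξ0.le,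
        ← rpow_mul hξ0.le]
      ring_nf
    rw [this]
    refine rpow_le_rpow_of_exponent_le hξ ?_
    have := Nat.le_ceil (α * β / (2 * (1 - α)))
    rw [div_le_iff₀ (by linarith)] at this
    linarith
  calc ‖FT (cubeAverage P) ξ‖
      ≤ P.real {w | ∑ i, ⟪ξ, w.2 i⟫ ^ 2 < (η * ‖ξ‖) ^ 2} +
          (k : ℝ) ^ N * D / ((η * ‖ξ‖) ^ 2) ^ N :=
        (norm_FT_cubeAverage_le P ξ).trans
          (integral_prod_norm_bumpFourier_le P ξ hD' (by positivity))
    _ ≤ C * η ^ β + (k : ℝ) ^ N * D / ‖ξ‖ ^ (α * β) := by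
        gcongr
        exact ENNReal.toReal_le_of_le_ofReal (by positivity) (hP ξ (norm_pos_iff.1 hξ0) η hη)
    _ = (C + (k : ℝ) ^ N * D) * ‖ξ‖ ^ (-(α * β)) := by
        rw [hηβ, rpow_neg hξ0.le]; ring

end

theorem stmt0_general (d k : ℕ) (β : ℝ)
    (Γ : Set (Gr d k)) (hΓ : BetaScaling Γ β)
    (E : Set (Ed d)) (hEc : IsCompact E) (hE : IsDKSet Γ E) :
    ∀ α : ℝ, 0 < α → α < 1 →
      ∃ μ : Measure (Ed d), IsProbabilityMeasure μ ∧ μ Eᶜ = 0 ∧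
        ∃ C : ℝ, 0 < C ∧ ∀ ξ : Ed d, 1 ≤ ‖ξ‖ →
          ‖FT μ ξ‖ ≤ C * ‖ξ‖ ^ (-(α * β)) := by
  intro α _ hα
  obtain ⟨γ, hγ, hγΓ, C, hC, hslab⟩ := hΓ
  obtain ⟨P, hP, hPE, hPγ⟩ := hE.exists_measure_cubeFrames hEc γ hγΓ
  obtain ⟨C', hC', hdecay⟩ := norm_FT_cubeAverage_le_rpow hC
    (fun ξ hξ η hη => (hPγ ξ η hη).trans (hslab ξ hξ η hη)) hα
  exact ⟨cubeAverage P, inferInstance, cubeAverage_compl_eq_zero hEc.isClosed.measurableSet hPE,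
    C', hC', hdecay⟩

/-- Fourier decay for compact `(d,k,Γ)`-sets with `β`-scaling `Γ`. -/
theorem stmt0 (d k : ℕ) (hk : 1 ≤ k) (hkd : k < d) (β : ℝ) (hβ : 0 ≤ β)
    (Γ : Set (Gr d k)) (hΓ : BetaScaling Γ β)
    (E : Set (Ed d)) (hEc : IsCompact E) (hE : IsDKSet Γ E) :
    ∀ α : ℝ, 0 < α → α < 1 →
      ∃ μ : Measure (Ed d), IsProbabilityMeasure μ ∧ μ Eᶜ = 0 ∧
        ∃ C : ℝ, 0 < C ∧ ∀ ξ : Ed d, 1 ≤ ‖ξ‖ →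
          ‖FT μ ξ‖ ≤ C * ‖ξ‖ ^ (-(α * β)) :=
  stmt0_general d k β Γ hΓ E hEc hE
end

section
/- Let d ≥ 1 and k ≥ 1 be integers, let Ω be a Borel subset of (ℝ^d)^k whose elements x = (x_1,…,x_k) are orthonormal families in ℝ^d, let γ be a Borel probability measure on (ℝ^d)^k concentrated on Ω, and let φ : ℝ → [0,∞) be a smooth function with support contained in [0,1] and ∫φ = 1. Suppose there are constants β ≥ 0 and C_0 > 0 such that γ({x ∈ Ω : |⟨ξ, x_i⟩| < η‖ξ‖ for all i = 1,…,k}) ≤ C_0 η^β for all ξ ∈ ℝ^d∖{0} and all η > 0. Then for every N > 0 there is a constant C_N > 0 such that for all ξ ∈ ℝ^d with ‖ξ‖ > 1 and all η ∈ (0,1), ∫ ∏_{i=1}^k |φ̂(⟨ξ, x_i⟩)| dγ(x) ≤ C_0 η^β + C_N (η‖ξ‖)^{−N}, where φ̂ denotes the Fourier transform on ℝ. -/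
open MeasureTheory Metric
open scoped RealInnerProductSpace ENNReal FourierTransform

noncomputable section

/-- Fourier transform of a function `φ : ℝ → ℝ`. -/
def FTfun (φ : ℝ → ℝ) (u : ℝ) : ℂ :=
  ∫ r : ℝ, (φ r : ℂ) * Complex.exp (-2 * Real.pi * Complex.I * u * r)

end

lemma FTfun_eq (φ : ℝ → ℝ) (u : ℝ) : FTfun φ u = 𝓕 (fun r => (φ r : ℂ)) u := by
  rw [Real.fourier_real_eq_integral_exp_smul, FTfun]
  congr 1; ext r
  rw [smul_eq_mul, mul_comm]
  congr 1
  push_cast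
  ring

section aux

variable {φ : ℝ → ℝ}

lemma aux_hcs (hφsupp : Function.support φ ⊆ Set.Icc (0 : ℝ) 1) :
    HasCompactSupport (fun r => (φ r : ℂ)) := by
  apply HasCompactSupport.intro (isCompact_Icc (a := (0:ℝ)) (b := 1))
  intro x hx
  have : φ x = 0 := by
    by_contra h
    exact hx (hφsupp h)
  simp [this]

lemma aux_hint (hφs : ContDiff ℝ (⊤ : ℕ∞) φ) (hφsupp : Function.support φ ⊆ Set.Icc (0 : ℝ) 1)
    (m : ℕ) : Integrable (iteratedDeriv m (fun r => (φ r : ℂ))) := by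
  have hgs : ContDiff ℝ (⊤ : ℕ∞) (fun r => (φ r : ℂ)) := Complex.ofRealCLM.contDiff.comp hφs
  apply Continuous.integrable_of_hasCompactSupport
  · exact (hgs.of_le le_rfl).continuous_iteratedDeriv m (by exact_mod_cast le_top)
  · induction m with
    | zero => simpa [iteratedDeriv_zero] using aux_hcs hφsupp
    | succ n ih => rw [iteratedDeriv_succ]; exact ih.deriv

lemma aux_abs_le (hφ0 : ∀ r, 0 ≤ φ r) (hφ1 : ∫ r, φ r = 1) (u : ℝ) :
    ‖FTfun φ u‖ ≤ 1 := by
  rw [FTfun_eq]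
  have h : ‖𝓕 (fun r => ((φ r : ℝ) : ℂ)) u‖ ≤ ∫ r : ℝ, ‖((φ r : ℝ) : ℂ)‖ :=
    VectorFourier.norm_fourierIntegral_le_integral_norm
      Real.fourierChar (volume : Measure ℝ) (innerₗ ℝ) (fun r => (φ r : ℂ)) u
  have heq : (∫ r : ℝ, ‖((φ r : ℝ) : ℂ)‖) = 1 := by
    rw [← hφ1]
    congr 1
    ext r
    rw [Complex.norm_real, Real.norm_eq_abs, abs_of_nonneg (hφ0 r)]
  exact h.trans_eq heq

/-- decay of the Fourier transform. -/
lemma aux_decay (hφs : ContDiff ℝ (⊤ : ℕ∞) φ) (hφsupp : Function.support φ ⊆ Set.Icc (0 : ℝ) 1)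
    (n : ℕ) :
    ∃ D : ℝ, 0 ≤ D ∧ ∀ u : ℝ, |u| ^ n * ‖FTfun φ u‖ ≤ D := by
  set g : ℝ → ℂ := fun r => (φ r : ℂ) with hg
  have hgs : ContDiff ℝ (⊤ : ℕ∞) g := Complex.ofRealCLM.contDiff.comp hφs
  have hint := aux_hint hφs hφsupp
  refine ⟨∫ v, ‖iteratedDeriv n g v‖, integral_nonneg (fun v => norm_nonneg _), fun u => ?_⟩
  have key := Real.fourier_iteratedDeriv (N := (⊤ : ℕ∞)) (n := n)
    (hgs.of_le (by simp)) (fun m _ => hint m) le_top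
  have hb : ‖𝓕 (iteratedDeriv n g) u‖ ≤ ∫ v, ‖iteratedDeriv n g v‖ :=
    VectorFourier.norm_fourierIntegral_le_integral_norm Real.fourierChar volume (innerₗ ℝ) _ u
  rw [key] at hb
  have hc : (2 * (Real.pi : ℂ) * Complex.I * u) = ((2 * Real.pi * u : ℝ) : ℂ) * Complex.I := by
    push_cast; ring
  have hn2 : ‖(2 * (Real.pi : ℂ) * Complex.I * u) ^ n • (𝓕 g u)‖
      = (2 * Real.pi * |u|) ^ n * ‖𝓕 g u‖ := by
    rw [norm_smul, norm_pow, hc, norm_mul, Complex.norm_I,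
      mul_one, Complex.norm_real, Real.norm_eq_abs, abs_mul,
      abs_of_nonneg (by positivity : (0:ℝ) ≤ 2 * Real.pi)]
  rw [hn2] at hb
  rw [FTfun_eq]
  refine le_trans ?_ hb
  have h1 : |u| ^ n ≤ (2 * Real.pi * |u|) ^ n := by
    apply pow_le_pow_left₀ (abs_nonneg u)
    nlinarith [Real.pi_gt_three, abs_nonneg u]
  exact mul_le_mul_of_nonneg_right h1 (norm_nonneg _)

end aux

/-- splitting the integral of the product of Fourier transforms of the bump
according to the scaling hypothesis. -/
theorem stmt12 (d k : ℕ) (hd : 1 ≤ d) (hk : 1 ≤ k)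
    (Ω : Set (Fin k → Ed d)) (hΩ : MeasurableSet Ω)
    (hortho : ∀ x ∈ Ω, Orthonormal ℝ x)
    (γ : Measure (Fin k → Ed d)) (hγ : IsProbabilityMeasure γ) (hγΩ : γ Ωᶜ = 0)
    (φ : ℝ → ℝ) (hφ0 : ∀ r, 0 ≤ φ r) (hφs : ContDiff ℝ (⊤ : ℕ∞) φ)
    (hφsupp : Function.support φ ⊆ Set.Icc (0 : ℝ) 1) (hφ1 : ∫ r, φ r = 1)
    (β C₀ : ℝ) (hβ : 0 ≤ β) (hC₀ : 0 < C₀)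
    (hscal : ∀ ξ : Ed d, ξ ≠ 0 → ∀ η : ℝ, 0 < η →
      γ {x | x ∈ Ω ∧ ∀ i, |⟪ξ, x i⟫| < η * ‖ξ‖} ≤ ENNReal.ofReal (C₀ * η ^ β)) :
    ∀ N : ℝ, 0 < N → ∃ CN : ℝ, 0 < CN ∧ ∀ ξ : Ed d, 1 < ‖ξ‖ → ∀ η : ℝ, 0 < η → η < 1 →
      ∫ x, ∏ i, ‖FTfun φ (⟪ξ, x i⟫)‖ ∂γ ≤
        C₀ * η ^ β + CN * (η * ‖ξ‖) ^ (-N) := by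
  intro N hN
  obtain ⟨n, hn⟩ : ∃ n : ℕ, N ≤ n := exists_nat_ge N
  obtain ⟨D, hD0, hD⟩ := aux_decay hφs hφsupp n
  set CN : ℝ := max 1 D with hCN
  have hCN1 : (1:ℝ) ≤ CN := le_max_left _ _
  have hCNpos : 0 < CN := lt_of_lt_of_le one_pos hCN1
  refine ⟨CN, hCNpos, fun ξ hξ η hη hη1 => ?_⟩
  have hξ0 : ξ ≠ 0 := by
    intro h; rw [h, norm_zero] at hξ; linarith
  set t : ℝ := η * ‖ξ‖ with ht
  have htpos : 0 < t := mul_pos hη (lt_trans one_pos hξ)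
  -- pointwise bound when |u| ≥ t
  have hpt : ∀ u : ℝ, t ≤ |u| → ‖FTfun φ u‖ ≤ CN * t ^ (-N) := by
    intro u hu
    rcases le_or_gt t 1 with h1 | h1
    · have h2 : (1:ℝ) ≤ t ^ (-N) := by
        calc (1:ℝ) = t ^ (0:ℝ) := by rw [Real.rpow_zero]
          _ ≤ t ^ (-N) := Real.rpow_le_rpow_of_exponent_ge htpos h1 (by linarith)
      calc ‖FTfun φ u‖ ≤ 1 := aux_abs_le hφ0 hφ1 u
        _ ≤ CN * t ^ (-N) := by nlinarith
    · have hu1 : 1 < |u| := lt_of_lt_of_le h1 hu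
      have hup : (0:ℝ) < |u| ^ n := pow_pos (lt_trans one_pos hu1) n
      have h3 : ‖FTfun φ u‖ ≤ D * |u| ^ (-(n:ℝ)) := by
        have h := hD u
        rw [Real.rpow_neg (abs_nonneg u), Real.rpow_natCast, ← div_eq_mul_inv,
          le_div_iff₀ hup, mul_comm]
        exact h
      have h4 : |u| ^ (-(n:ℝ)) ≤ |u| ^ (-N) :=
        Real.rpow_le_rpow_of_exponent_le hu1.le (by linarith)
      have h5 : |u| ^ (-N) ≤ t ^ (-N) :=
        Real.rpow_le_rpow_of_nonpos htpos hu (by linarith)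
      calc ‖FTfun φ u‖ ≤ D * |u| ^ (-(n:ℝ)) := h3
        _ ≤ D * (t ^ (-N)) := by
            apply mul_le_mul_of_nonneg_left (le_trans h4 h5) hD0
        _ ≤ CN * t ^ (-N) := by
            apply mul_le_mul_of_nonneg_right (le_max_right _ _) (Real.rpow_nonneg htpos.le _)
  -- the bad set
  set A : Set (Fin k → Ed d) := {x | x ∈ Ω ∧ ∀ i, |⟪ξ, x i⟫| < t} with hA
  have hcont : ∀ i : Fin k, Continuous fun x : Fin k → Ed d => ⟪ξ, x i⟫ :=
    fun i => Continuous.inner continuous_const (continuous_apply i)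
  have hAmeas : MeasurableSet A := by
    have : A = Ω ∩ ⋂ i, {x : Fin k → Ed d | |⟪ξ, x i⟫| < t} := by
      ext x; simp [hA, Set.mem_iInter]
    rw [this]
    exact hΩ.inter (MeasurableSet.iInter fun i =>
      measurableSet_lt ((hcont i).abs.measurable) measurable_const)
  -- the integrand
  set f : (Fin k → Ed d) → ℝ := fun x => ∏ i, ‖FTfun φ (⟪ξ, x i⟫)‖ with hf
  have hftcont : Continuous (FTfun φ) := by
    have : FTfun φ = 𝓕 (fun r => (φ r : ℂ)) := funext (FTfun_eq φ)
    rw [this]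
    exact VectorFourier.fourierIntegral_continuous Real.continuous_fourierChar
      (by exact continuous_inner) (by simpa using aux_hint hφs hφsupp 0)
  have hfcont : Continuous f :=
    continuous_finset_prod _ fun i _ => continuous_norm.comp (hftcont.comp (hcont i))
  have hfle1 : ∀ x, f x ≤ 1 :=
    fun x => Finset.prod_le_one (fun i _ => norm_nonneg _)
      (fun i _ => aux_abs_le hφ0 hφ1 _)
  have hf0 : ∀ x, 0 ≤ f x := fun x => Finset.prod_nonneg fun i _ => norm_nonneg _
  have hfint : Integrable f γ := by
    refine Integrable.mono' (integrable_const 1) hfcont.aestronglyMeasurable ?_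
    filter_upwards with x
    rw [Real.norm_eq_abs, abs_of_nonneg (hf0 x)]
    exact hfle1 x
  -- the bound function
  set b : (Fin k → Ed d) → ℝ := fun x => A.indicator (fun _ => 1) x + CN * t ^ (-N) with hb
  have hbint : Integrable b γ :=
    ((integrable_const (1:ℝ)).indicator hAmeas).add (integrable_const _)
  have haeΩ : ∀ᵐ x ∂γ, x ∈ Ω := by
    rw [MeasureTheory.ae_iff]
    exact hγΩ
  have hM0 : 0 ≤ CN * t ^ (-N) :=
    mul_nonneg hCNpos.le (Real.rpow_nonneg htpos.le _)
  have hfb : ∀ᵐ x ∂γ, f x ≤ b x := by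
    filter_upwards [haeΩ] with x hxΩ
    by_cases hxA : x ∈ A
    · rw [hb]
      simp only [Set.indicator_of_mem hxA]
      linarith [hfle1 x]
    · have : ∃ i : Fin k, t ≤ |⟪ξ, x i⟫| := by
        by_contra h
        push_neg at h
        exact hxA ⟨hxΩ, h⟩
      obtain ⟨i0, hi0⟩ := this
      have hfx : f x ≤ CN * t ^ (-N) := by
        show (∏ i, ‖FTfun φ (⟪ξ, x i⟫)‖) ≤ _
        rw [← Finset.mul_prod_erase Finset.univ _ (Finset.mem_univ i0)]
        calc ‖FTfun φ ⟪ξ, x i0⟫‖ *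
              ∏ i ∈ Finset.univ.erase i0, ‖FTfun φ ⟪ξ, x i⟫‖
            ≤ (CN * t ^ (-N)) * 1 := by
              apply mul_le_mul (hpt _ hi0)
                (Finset.prod_le_one (fun i _ => norm_nonneg _)
                  (fun i _ => aux_abs_le hφ0 hφ1 _))
                (Finset.prod_nonneg fun i _ => norm_nonneg _) hM0
          _ = CN * t ^ (-N) := mul_one _
      rw [hb]
      simp only [Set.indicator_of_notMem hxA]
      linarith
  have hmain : ∫ x, f x ∂γ ≤ ∫ x, b x ∂γ := integral_mono_ae hfint hbint hfb
  have hbval : ∫ x, b x ∂γ = (γ A).toReal + CN * t ^ (-N) := by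
    rw [hb]
    rw [integral_add ((integrable_const (1:ℝ)).indicator hAmeas) (integrable_const _)]
    rw [integral_indicator_const _ hAmeas, integral_const]
    simp [measure_univ, Measure.real]
  have hAbound : (γ A).toReal ≤ C₀ * η ^ β := by
    have h := hscal ξ hξ0 η hη
    have h2 : γ A ≤ ENNReal.ofReal (C₀ * η ^ β) := h
    calc (γ A).toReal ≤ (ENNReal.ofReal (C₀ * η ^ β)).toReal :=
          ENNReal.toReal_mono ENNReal.ofReal_ne_top h2
      _ = C₀ * η ^ β := ENNReal.toReal_ofReal
          (mul_nonneg hC₀.le (Real.rpow_nonneg hη.le β))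
  calc ∫ x, f x ∂γ ≤ ∫ x, b x ∂γ := hmain
    _ = (γ A).toReal + CN * t ^ (-N) := hbval
    _ ≤ C₀ * η ^ β + CN * (η * ‖ξ‖) ^ (-N) := by
        rw [ht]; linarith
end
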